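/- For the hypercube Q_n with n ≥ 2, the zero blocking number satisfies B(Q_n) = n; in particular the open neighborhood N(x) of any vertex x is a minimum zero blocking set. -/

import Mathlib

open Set

/-- One step of the zero forcing process on the set `W` of white vertices:
a white vertex is removed (colored black) if it is the unique white neighbor
of some black vertex. -/
def zbStep {V : Type*} (G : SimpleGraph V) (W : Set V) : Set V :=
  {w ∈ W | ¬ ∃ b ∉ W, G.Adj b w ∧ ∀ w' ∈ W, G.Adj b w' → w' = w}

/-- `W` is a zero blocking set: the zero forcing process started with white set `W`
never colors all of `W` black. -/
def IsZeroBlocking {V : Type*} (G : SimpleGraph V) (W : Set V) : Prop :=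
  ∀ n : ℕ, ((zbStep G)^[n] W).Nonempty

/-- The zero blocking number `B(G)`. -/
noncomputable def zbNum {V : Type*} (G : SimpleGraph V) : ℕ∞ :=
  ⨅ (W : Set V) (_ : IsZeroBlocking G W), W.encard


/-- The `n`-dimensional hypercube: vertices are subsets of `{1,…,n}`, adjacent
iff their symmetric difference has exactly one element. -/
def cubeGraph (n : ℕ) : SimpleGraph (Finset (Fin n)) where
  Adj x y := (symmDiff x y).card = 1
  symm := ⟨by intro x y h; rwa [symmDiff_comm]⟩
  loopless := ⟨by intro x h; simp [symmDiff_self] at h⟩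



namespace ZB
variable {ι : Type*} [DecidableEq ι]
abbrev adj (s t : Finset ι) : Prop := (symmDiff s t).card = 1
lemma adj_flip (s : Finset ι) (j : ι) : adj s (symmDiff s {j}) := by
  simp [adj, symmDiff_symmDiff_cancel_left]
lemma adj_iff {s t : Finset ι} : adj s t ↔ ∃ j, t = symmDiff s {j} := by
  constructor
  · intro h
    obtain ⟨j, hj⟩ := Finset.card_eq_one.mp h
    exact ⟨j, by rw [← hj, symmDiff_symmDiff_cancel_left]⟩
  · rintro ⟨j, rfl⟩; exact adj_flip s j
lemma adj_symm {s t : Finset ι} (h : adj s t) : adj t s := by rwa [adj, symmDiff_comm]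
lemma adj_irrefl (s : Finset ι) : ¬ adj s s := by simp [adj]
lemma flip_flip (s : Finset ι) (j : ι) : symmDiff (symmDiff s {j}) {j} = s :=
  symmDiff_symmDiff_cancel_right _ _
lemma flip_ne (s : Finset ι) (j : ι) : symmDiff s {j} ≠ s := by
  intro h
  have := adj_flip s j
  rw [h] at this
  exact adj_irrefl s this
lemma mem_flip_iff {s : Finset ι} {j a : ι} : a ∈ symmDiff s {j} ↔ (a ∈ s ↔ ¬ a = j) := by
  simp [Finset.mem_symmDiff]; tauto
lemma erase_symmDiff (s t : Finset ι) (i : ι) :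
    (symmDiff s t).erase i = symmDiff (s.erase i) (t.erase i) := by
  ext a
  simp only [Finset.mem_erase, Finset.mem_symmDiff]
  tauto
lemma symmDiff_subset_union (s t : Finset ι) : symmDiff s t ⊆ s ∪ t := by
  intro a ha
  rw [Finset.mem_symmDiff] at ha
  rw [Finset.mem_union]
  tauto
lemma layer_eq_of_adj {s t : Finset ι} {i j : ι} (h : t = symmDiff s {j}) (hji : j ≠ i) :
    (i ∈ s ↔ i ∈ t) := by
  subst h
  have hij : ¬ i = j := fun h => hji h.symm
  rw [mem_flip_iff]
  tauto
lemma adj_erase {s t : Finset ι} {i : ι} (h : adj s t) (hl : i ∈ s ↔ i ∈ t) :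
    adj (s.erase i) (t.erase i) := by
  obtain ⟨j, rfl⟩ := adj_iff.mp h
  have hji : j ≠ i := by
    rintro rfl
    rw [mem_flip_iff] at hl
    tauto
  have hst : symmDiff s (symmDiff s {j}) = {j} := symmDiff_symmDiff_cancel_left _ _
  show (symmDiff (s.erase i) ((symmDiff s {j}).erase i)).card = 1
  rw [← erase_symmDiff, hst,
    Finset.erase_eq_of_notMem (by simp only [Finset.mem_singleton]; exact fun h => hji h.symm),
    Finset.card_singleton]

lemma flip_eq_insert {b : Finset ι} {i : ι} (hib : i ∉ b) : symmDiff b {i} = insert i b := by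
  ext a
  rw [mem_flip_iff, Finset.mem_insert]
  by_cases h : a = i
  · subst h; tauto
  · tauto

lemma flip_mem_self {b : Finset ι} {i : ι} (hib : i ∉ b) : i ∈ symmDiff b {i} := by
  rw [mem_flip_iff]; tauto

lemma erase_flip {f : Finset ι} (i : ι) : (symmDiff f {i}).erase i = f.erase i := by
  ext a
  simp only [Finset.mem_erase, mem_flip_iff]
  tauto

lemma flip_eq_erase {b : Finset ι} {i : ι} (hib : i ∈ b) : symmDiff b {i} = b.erase i := by
  ext a
  rw [mem_flip_iff, Finset.mem_erase]
  by_cases h : a = i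
  · subst h; tauto
  · tauto

lemma eq_lift {f b : Finset ι} {i : ι} (_hb : i ∉ b) (h : f.erase i = b) :
    f = b ∨ f = insert i b := by
  by_cases hf : i ∈ f
  · right; rw [← h, Finset.insert_erase hf]
  · left; rw [← h, Finset.erase_eq_of_notMem hf]

lemma symmDiff_insert_insert {b w : Finset ι} {i : ι} (hib : i ∉ b) (hiw : i ∉ w) :
    symmDiff (insert i b) (insert i w) = symmDiff b w := by
  ext a
  by_cases h : a = i
  · subst h; simp [Finset.mem_symmDiff, hib, hiw]
  · simp [Finset.mem_symmDiff, Finset.mem_insert, h]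

def IsFortOn (u : Finset ι) (F : Finset (Finset ι)) : Prop :=
  (∀ s ∈ F, s ⊆ u) ∧
  ∀ b : Finset ι, b ⊆ u → b ∉ F → ∀ w ∈ F, adj b w → ∃ w' ∈ F, adj b w' ∧ w' ≠ w

lemma proj_fort {u : Finset ι} {F : Finset (Finset ι)} {i : ι} (hi : i ∈ u)
    (hF : IsFortOn u F) : IsFortOn (u.erase i) (F.image (·.erase i)) := by
  obtain ⟨hsub, hfort⟩ := hF
  constructor
  · intro s hs
    rw [Finset.mem_image] at hs
    obtain ⟨f, hf, rfl⟩ := hs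
    exact Finset.erase_subset_erase i (hsub f hf)
  · intro b hbu hbG w hwG hadj
    rw [Finset.mem_image] at hwG
    obtain ⟨f, hfF, hfw⟩ := hwG
    have hib : i ∉ b := fun h => (Finset.mem_erase.mp (hbu h)).1 rfl
    have hiw : i ∉ w := by rw [← hfw]; exact Finset.notMem_erase i f
    have hbF : b ∉ F := fun h =>
      hbG (Finset.mem_image.mpr ⟨b, h, Finset.erase_eq_of_notMem hib⟩)
    have hbF' : insert i b ∉ F := fun h =>
      hbG (Finset.mem_image.mpr ⟨_, h, Finset.erase_insert hib⟩)
    -- choose the lift of b in the same layer as f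
    set b₀ : Finset ι := if i ∈ f then insert i b else b with hb₀
    have hlay : i ∈ b₀ ↔ i ∈ f := by
      by_cases h : i ∈ f <;> simp [hb₀, h, hib]
    have hb₀e : b₀.erase i = b := by
      by_cases h : i ∈ f <;> simp [hb₀, h, Finset.erase_insert hib,
        Finset.erase_eq_of_notMem hib]
    have hb₀u : b₀ ⊆ u := by
      by_cases h : i ∈ f
      · simp only [hb₀, if_pos h]
        exact Finset.insert_subset hi (fun a ha => Finset.mem_of_mem_erase (hbu ha))
      · simp only [hb₀, if_neg h]
        exact fun a ha => Finset.mem_of_mem_erase (hbu ha)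
    have hb₀F : b₀ ∉ F := by
      by_cases h : i ∈ f <;> simp [hb₀, h, hbF, hbF']
    have hadj₀ : adj b₀ f := by
      by_cases h : i ∈ f
      · have hf' : f = insert i w := by
          rcases eq_lift hiw hfw with h1 | h1
          · rw [h1] at h; exact absurd h hiw
          · exact h1
        rw [hb₀, if_pos h, hf']
        show (symmDiff (insert i b) (insert i w)).card = 1
        rw [symmDiff_insert_insert hib hiw]
        exact hadj
      · have hf' : f = w := by
          rcases eq_lift hiw hfw with h1 | h1
          · exact h1
          · rw [h1] at h; simp at h
        rw [hb₀, if_neg h, hf']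
        exact hadj
    obtain ⟨z, hzF, hz1, hz2⟩ := hfort b₀ hb₀u hb₀F f hfF hadj₀
    obtain ⟨k, hk⟩ := adj_iff.mp hz1
    have hki : k ≠ i := by
      intro e
      rw [e] at hk
      -- z would be the other lift of b, which is not in F
      by_cases h : i ∈ f
      · rw [hb₀, if_pos h] at hk
        rw [hk, flip_eq_erase (Finset.mem_insert_self i b), Finset.erase_insert hib] at hzF
        exact hbF hzF
      · rw [hb₀, if_neg h] at hk
        rw [hk, flip_eq_insert hib] at hzF
        exact hbF' hzF
    have hlz : i ∈ b₀ ↔ i ∈ z := layer_eq_of_adj hk hki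
    refine ⟨z.erase i, Finset.mem_image.mpr ⟨z, hzF, rfl⟩, ?_, ?_⟩
    · have := adj_erase hz1 hlz
      rwa [hb₀e] at this
    · intro hcon
      rcases eq_lift hiw hcon with h1 | h1 <;> rcases eq_lift hiw hfw with h2 | h2
      · exact hz2 (h1.trans h2.symm)
      · have : i ∈ z := hlz.mp (hlay.mpr (h2 ▸ Finset.mem_insert_self i w))
        rw [h1] at this; exact hiw this
      · have hif : i ∈ f := hlay.mp (hlz.mpr (h1 ▸ Finset.mem_insert_self i w))
        rw [h2] at hif; exact hiw hif
      · exact hz2 (h1.trans h2.symm)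

lemma flip_inj {s : Finset ι} {j k : ι} (h : symmDiff s {j} = symmDiff s {k}) : j = k := by
  have : ({j} : Finset ι) = {k} := by
    have := congrArg (symmDiff s) h
    rwa [symmDiff_symmDiff_cancel_left, symmDiff_symmDiff_cancel_left] at this
  simpa using this

lemma card_proj_add_one {F : Finset (Finset ι)} {i : ι} {v : Finset ι}
    (hv : v ∈ F) (hv' : insert i v ∈ F) (hiv : i ∉ v) :
    (F.image (·.erase i)).card + 1 ≤ F.card := by
  have hne : v ≠ insert i v := fun h => hiv (h ▸ Finset.mem_insert_self i v)
  have himg : F.image (·.erase i) = (F.erase (insert i v)).image (·.erase i) := by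
    apply Finset.Subset.antisymm
    · intro t ht
      rw [Finset.mem_image] at ht ⊢
      obtain ⟨f, hf, rfl⟩ := ht
      by_cases hfe : f = insert i v
      · exact ⟨v, Finset.mem_erase.mpr ⟨hne, hv⟩, by
          rw [hfe, Finset.erase_insert hiv, Finset.erase_eq_of_notMem hiv]⟩
      · exact ⟨f, Finset.mem_erase.mpr ⟨hfe, hf⟩, rfl⟩
    · exact Finset.image_subset_image (Finset.erase_subset _ _)
  have h1 : (F.erase (insert i v)).card = F.card - 1 := Finset.card_erase_of_mem hv'
  have h2 := Finset.card_image_le (s := F.erase (insert i v)) (f := (·.erase i))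
  have h3 : 0 < F.card := Finset.card_pos.mpr ⟨v, hv⟩
  rw [himg]
  omega

lemma card_proj_add_two {F : Finset (Finset ι)} {i : ι} {v w : Finset ι}
    (hv : v ∈ F) (hv' : insert i v ∈ F) (hiv : i ∉ v)
    (hw : w ∈ F) (hw' : insert i w ∈ F) (hiw : i ∉ w) (hvw : v ≠ w) :
    (F.image (·.erase i)).card + 2 ≤ F.card := by
  have hne1 : v ≠ insert i v := fun h => hiv (h ▸ Finset.mem_insert_self i v)
  have hne2 : w ≠ insert i w := fun h => hiw (h ▸ Finset.mem_insert_self i w)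
  have hne3 : insert i v ≠ insert i w := by
    intro h
    apply hvw
    have := congrArg (·.erase i) h
    simpa [Finset.erase_insert hiv, Finset.erase_insert hiw] using this
  have hvne : v ≠ insert i w := fun h => hiv (h ▸ Finset.mem_insert_self i w)
  have hwne : w ≠ insert i v := fun h => hiw (h ▸ Finset.mem_insert_self i v)
  set F' := (F.erase (insert i v)).erase (insert i w) with hF'
  have himg : F.image (·.erase i) = F'.image (·.erase i) := by
    apply Finset.Subset.antisymm
    · intro t ht
      rw [Finset.mem_image] at ht ⊢
      obtain ⟨f, hf, rfl⟩ := ht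
      by_cases hfe : f = insert i v
      · refine ⟨v, ?_, by rw [hfe, Finset.erase_insert hiv, Finset.erase_eq_of_notMem hiv]⟩
        rw [hF', Finset.mem_erase, Finset.mem_erase]
        exact ⟨hvne, hne1, hv⟩
      · by_cases hfe2 : f = insert i w
        · refine ⟨w, ?_, by rw [hfe2, Finset.erase_insert hiw, Finset.erase_eq_of_notMem hiw]⟩
          rw [hF', Finset.mem_erase, Finset.mem_erase]
          exact ⟨hne2, hwne, hw⟩
        · exact ⟨f, by rw [hF', Finset.mem_erase, Finset.mem_erase]; exact ⟨hfe2, hfe, hf⟩, rfl⟩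
    · exact Finset.image_subset_image ((Finset.erase_subset _ _).trans (Finset.erase_subset _ _))
  have hmem2 : insert i w ∈ F.erase (insert i v) := Finset.mem_erase.mpr ⟨hne3.symm, hw'⟩
  have h1 : (F.erase (insert i v)).card = F.card - 1 := Finset.card_erase_of_mem hv'
  have h2 : F'.card = (F.erase (insert i v)).card - 1 := Finset.card_erase_of_mem hmem2
  have h3 := Finset.card_image_le (s := F') (f := (·.erase i))
  have h4 : 0 < F.card := Finset.card_pos.mpr ⟨v, hv⟩
  have h5 : 0 < (F.erase (insert i v)).card := Finset.card_pos.mpr ⟨insert i w, hmem2⟩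
  rw [himg]
  omega

theorem fort_card (u : Finset ι) :
    ∀ F : Finset (Finset ι), IsFortOn u F → F.Nonempty →
      u.card ≤ F.card ∧ ((∀ x ∈ F, ∃ y ∈ F, adj x y) → u.card + 1 ≤ F.card) := by
  induction u using Finset.strongInduction with
  | _ u IH =>
  intro F hF hne
  rcases Finset.eq_empty_or_nonempty u with hu | hu
  · subst hu
    exact ⟨Nat.zero_le _, fun _ => by simpa using Finset.card_pos.mpr hne⟩
  constructor
  · -- part (a)
    obtain ⟨i, hi⟩ := hu
    have hssub : u.erase i ⊂ u := Finset.erase_ssubset hi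
    set G := F.image (·.erase i) with hGdef
    have hGfort := proj_fort hi hF
    have hGne : G.Nonempty := hne.image _
    have hucard : u.card = (u.erase i).card + 1 := by
      rw [Finset.card_erase_of_mem hi]
      have : 0 < u.card := Finset.card_pos.mpr ⟨i, hi⟩
      omega
    by_cases hdbl : ∃ v, i ∉ v ∧ v ∈ F ∧ insert i v ∈ F
    · obtain ⟨v, hiv, hv, hv'⟩ := hdbl
      have h1 : G.card + 1 ≤ F.card := card_proj_add_one hv hv' hiv
      have h2 := (IH _ hssub G hGfort hGne).1
      omega
    · have hmind : ∀ t ∈ G, ∃ z ∈ G, adj t z := by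
        intro t ht
        obtain ⟨f, hfF, rfl⟩ := Finset.mem_image.mp ht
        have hf'F : symmDiff f {i} ∉ F := by
          intro hmem
          apply hdbl
          by_cases hif : i ∈ f
          · refine ⟨symmDiff f {i}, ?_, hmem, ?_⟩
            · rw [mem_flip_iff]; tauto
            · rw [flip_eq_erase hif, Finset.insert_erase hif]
              exact hfF
          · exact ⟨f, hif, hfF, by rw [← flip_eq_insert hif]; exact hmem⟩
        have hf'u : symmDiff f {i} ⊆ u :=
          (symmDiff_subset_union f {i}).trans
            (Finset.union_subset (hF.1 f hfF) (Finset.singleton_subset_iff.mpr hi))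
        obtain ⟨z, hzF, hz1, hz2⟩ := hF.2 _ hf'u hf'F f hfF (adj_symm (adj_flip f i))
        obtain ⟨k, hk⟩ := adj_iff.mp hz1
        have hki : k ≠ i := by
          intro e
          rw [e, flip_flip] at hk
          exact hz2 hk
        have := adj_erase hz1 (layer_eq_of_adj hk hki)
        rw [erase_flip] at this
        exact ⟨z.erase i, Finset.mem_image.mpr ⟨z, hzF, rfl⟩, this⟩
      have h2 := (IH _ hssub G hGfort hGne).2 hmind
      have h3 : G.card ≤ F.card := Finset.card_image_le
      omega
  · -- part (b)
    intro hmd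
    obtain ⟨x0, hx0⟩ := hne
    obtain ⟨y0, hy0F, hadj0⟩ := hmd x0 hx0
    obtain ⟨i, rfl⟩ := adj_iff.mp hadj0
    have hi : i ∈ u := by
      by_cases hix : i ∈ x0
      · exact hF.1 x0 hx0 hix
      · exact hF.1 _ hy0F (flip_mem_self hix)
    have hssub : u.erase i ⊂ u := Finset.erase_ssubset hi
    have hucard : u.card = (u.erase i).card + 1 := by
      rw [Finset.card_erase_of_mem hi]
      have : 0 < u.card := Finset.card_pos.mpr ⟨i, hi⟩
      omega
    set G := F.image (·.erase i) with hGdef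
    have hGfort := proj_fort hi hF
    have hGne : G.Nonempty := ⟨x0.erase i, Finset.mem_image.mpr ⟨x0, hx0, rfl⟩⟩
    have main : ∀ x, x ∈ F → i ∉ x → symmDiff x {i} ∈ F → u.card + 1 ≤ F.card := by
      intro x hxF hix hyF
      have hyF' : insert i x ∈ F := by rw [← flip_eq_insert hix]; exact hyF
      by_cases hdbl2 : ∃ v, i ∉ v ∧ v ∈ F ∧ insert i v ∈ F ∧ v ≠ x
      · obtain ⟨v, hiv, hv, hv', hvx⟩ := hdbl2
        have h1 : G.card + 2 ≤ F.card := card_proj_add_two hv hv' hiv hxF hyF' hix hvx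
        have h2 := (IH _ hssub G hGfort hGne).1
        omega
      · have huniq : ∀ v, i ∉ v → v ∈ F → insert i v ∈ F → v = x := by
          intro v h1 h2 h3
          by_contra hne'
          exact hdbl2 ⟨v, h1, h2, h3, hne'⟩
        by_cases hmindG : ∀ t ∈ G, ∃ z ∈ G, adj t z
        · have h2 := (IH _ hssub G hGfort hGne).2 hmindG
          have h1 : G.card + 1 ≤ F.card := card_proj_add_one hxF hyF' hix
          omega
        · push_neg at hmindG
          obtain ⟨t, htG, hiso⟩ := hmindG
          have htx : t = x := by
            obtain ⟨f, hfF, rfl⟩ := Finset.mem_image.mp htG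
            obtain ⟨g, hgF, hadjfg⟩ := hmd f hfF
            obtain ⟨k, hk⟩ := adj_iff.mp hadjfg
            by_cases hki : k = i
            · rw [hki] at hk
              by_cases hif : i ∈ f
              · apply huniq
                · exact Finset.notMem_erase i f
                · rw [← flip_eq_erase hif, ← hk]; exact hgF
                · rw [Finset.insert_erase hif]; exact hfF
              · have hfx : f = x :=
                  huniq f hif hfF (by rw [← flip_eq_insert hif, ← hk]; exact hgF)
                rw [hfx, Finset.erase_eq_of_notMem (hfx ▸ hif)]
            · have had := adj_erase hadjfg (layer_eq_of_adj hk hki)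
              exact absurd had (hiso _ (Finset.mem_image.mpr ⟨g, hgF, rfl⟩))
          rw [htx] at hiso
          have hxe : x.erase i = x := Finset.erase_eq_of_notMem hix
          have hiso' : ∀ z, z ∈ F → ¬ adj x (z.erase i) := fun z hz =>
            hiso _ (Finset.mem_image.mpr ⟨z, hz, rfl⟩)
          have hNx : ∀ z ∈ F, adj x z → z = symmDiff x {i} := by
            intro z hz hadj
            obtain ⟨k, hk⟩ := adj_iff.mp hadj
            by_cases hki : k = i
            · rw [hk, hki]
            · have := adj_erase hadj (layer_eq_of_adj hk hki)
              rw [hxe] at this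
              exact absurd this (hiso' z hz)
          have hNy : ∀ z ∈ F, adj (symmDiff x {i}) z → z = x := by
            intro z hz hadj
            obtain ⟨k, hk⟩ := adj_iff.mp hadj
            by_cases hki : k = i
            · rw [hk, hki, flip_flip]
            · have := adj_erase hadj (layer_eq_of_adj hk hki)
              rw [erase_flip, hxe] at this
              exact absurd this (hiso' z hz)
          have claim : ∀ a b : Finset ι, a ∈ F → b = symmDiff a {i} →
              (∀ z ∈ F, adj a z → z = b) → (∀ z ∈ F, adj b z → z = a) →
              ∀ j, j ∈ u → j ≠ i →
                ∃ z, z ∈ F ∧ (symmDiff z a).card = 2 ∧ i ∉ symmDiff z a ∧ j ∈ symmDiff z a := by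
            intro a b haF hb hNa hNb j hju hji
            have hwu : symmDiff a {j} ⊆ u :=
              (symmDiff_subset_union _ _).trans
                (Finset.union_subset (hF.1 a haF) (Finset.singleton_subset_iff.mpr hju))
            have hwF : symmDiff a {j} ∉ F := by
              intro hmem
              have h := hNa _ hmem (adj_flip a j)
              rw [hb] at h
              exact hji (flip_inj h)
            obtain ⟨z, hzF, hz1, hz2⟩ := hF.2 _ hwu hwF a haF (adj_symm (adj_flip a j))
            obtain ⟨k, hk⟩ := adj_iff.mp hz1
            have hkj : k ≠ j := fun e => hz2 (by rw [hk, e, flip_flip])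
            have hki : k ≠ i := by
              intro e
              rw [e] at hk
              have hzb : z = symmDiff b {j} := by
                rw [hk, hb, symmDiff_assoc, symmDiff_assoc, symmDiff_comm ({j} : Finset ι) {i}]
              exact hz2 (hNb z hzF (by rw [hzb]; exact adj_flip b j))
            have hza : symmDiff z a = symmDiff ({j} : Finset ι) {k} := by
              rw [symmDiff_comm, hk, ← symmDiff_assoc, symmDiff_symmDiff_cancel_left]
            have hjk' : symmDiff ({j} : Finset ι) {k} = {j, k} := by
              ext a'
              simp only [Finset.mem_symmDiff, Finset.mem_singleton, Finset.mem_insert]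
              constructor
              · rintro (⟨h1, h2⟩ | ⟨h1, h2⟩) <;> tauto
              · rintro (rfl | rfl)
                · exact Or.inl ⟨rfl, fun e => hkj e.symm⟩
                · exact Or.inr ⟨rfl, hkj⟩
            refine ⟨z, hzF, ?_, ?_, ?_⟩
            · rw [hza, hjk']
              exact Finset.card_pair hkj.symm
            · rw [hza, hjk']
              simp only [Finset.mem_insert, Finset.mem_singleton]
              rintro (h | h)
              · exact hji h.symm
              · exact hki h.symm
            · rw [hza, hjk']
              exact Finset.mem_insert_self j {k}
          have claimx := claim x (symmDiff x {i}) hxF rfl hNx hNy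
          have claimy := claim (symmDiff x {i}) x hyF (by rw [flip_flip]) hNy hNx
          set y := symmDiff x {i} with hy
          set Tx := F.filter (fun z => (symmDiff z x).card = 2 ∧ i ∉ symmDiff z x) with hTxdef
          set Ty := F.filter (fun z => (symmDiff z y).card = 2 ∧ i ∉ symmDiff z y) with hTydef
          have hcovx : u.erase i ⊆ Tx.biUnion (fun z => symmDiff z x) := by
            intro j hj
            obtain ⟨hji, hju⟩ := Finset.mem_erase.mp hj
            obtain ⟨z, hzF, h1, h2, h3⟩ := claimx j hju hji
            exact Finset.mem_biUnion.mpr ⟨z, Finset.mem_filter.mpr ⟨hzF, h1, h2⟩, h3⟩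
          have hcovy : u.erase i ⊆ Ty.biUnion (fun z => symmDiff z y) := by
            intro j hj
            obtain ⟨hji, hju⟩ := Finset.mem_erase.mp hj
            obtain ⟨z, hzF, h1, h2, h3⟩ := claimy j hju hji
            exact Finset.mem_biUnion.mpr ⟨z, Finset.mem_filter.mpr ⟨hzF, h1, h2⟩, h3⟩
          have hcountx : (u.erase i).card ≤ 2 * Tx.card := by
            calc (u.erase i).card ≤ (Tx.biUnion (fun z => symmDiff z x)).card :=
                  Finset.card_le_card hcovx
              _ ≤ ∑ z ∈ Tx, (symmDiff z x).card := Finset.card_biUnion_le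
              _ = ∑ _z ∈ Tx, 2 :=
                  Finset.sum_congr rfl (fun z hz => (Finset.mem_filter.mp hz).2.1)
              _ = 2 * Tx.card := by rw [Finset.sum_const, smul_eq_mul, mul_comm]
          have hcounty : (u.erase i).card ≤ 2 * Ty.card := by
            calc (u.erase i).card ≤ (Ty.biUnion (fun z => symmDiff z y)).card :=
                  Finset.card_le_card hcovy
              _ ≤ ∑ z ∈ Ty, (symmDiff z y).card := Finset.card_biUnion_le
              _ = ∑ _z ∈ Ty, 2 :=
                  Finset.sum_congr rfl (fun z hz => (Finset.mem_filter.mp hz).2.1)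
              _ = 2 * Ty.card := by rw [Finset.sum_const, smul_eq_mul, mul_comm]
          have hxy : x ≠ y := (flip_ne x i).symm
          have hxyc : (symmDiff x y).card = 1 := by
            rw [hy, symmDiff_symmDiff_cancel_left]
            exact Finset.card_singleton i
          have hyxc : (symmDiff y x).card = 1 := by rw [symmDiff_comm]; exact hxyc
          have hxTx : x ∉ Tx := by
            intro h
            have h2 := (Finset.mem_filter.mp h).2.1
            rw [symmDiff_self] at h2
            simp at h2
          have hxTy : x ∉ Ty := by
            intro h
            have h2 := (Finset.mem_filter.mp h).2.1
            rw [hxyc] at h2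
            omega
          have hyTx : y ∉ Tx := by
            intro h
            have h2 := (Finset.mem_filter.mp h).2.1
            rw [hyxc] at h2
            omega
          have hyTy : y ∉ Ty := by
            intro h
            have h2 := (Finset.mem_filter.mp h).2.1
            rw [symmDiff_self] at h2
            simp at h2
          have hdisj : Disjoint Tx Ty := by
            rw [Finset.disjoint_left]
            intro z hz1 hz2
            obtain ⟨hc1, hi1⟩ := (Finset.mem_filter.mp hz1).2
            obtain ⟨hc2, hi2⟩ := (Finset.mem_filter.mp hz2).2
            have he : symmDiff z y = insert i (symmDiff z x) := by
              rw [hy, ← symmDiff_assoc, flip_eq_insert hi1]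
            have h3 : (symmDiff z y).card = (symmDiff z x).card + 1 := by
              rw [he, Finset.card_insert_of_notMem hi1]
            omega
          have hyMem : y ∉ Tx ∪ Ty := by
            rw [Finset.mem_union]
            push_neg
            exact ⟨hyTx, hyTy⟩
          have hxMem : x ∉ insert y (Tx ∪ Ty) := by
            rw [Finset.mem_insert, Finset.mem_union]
            push_neg
            exact ⟨hxy, hxTx, hxTy⟩
          have hsubF : insert x (insert y (Tx ∪ Ty)) ⊆ F := by
            intro z hz
            rcases Finset.mem_insert.mp hz with rfl | hz
            · exact hxF
            rcases Finset.mem_insert.mp hz with rfl | hz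
            · exact hyF
            rcases Finset.mem_union.mp hz with hz | hz
            · exact (Finset.mem_filter.mp hz).1
            · exact (Finset.mem_filter.mp hz).1
          have hcardF := Finset.card_le_card hsubF
          have hcardins : (insert x (insert y (Tx ∪ Ty))).card = 2 + (Tx.card + Ty.card) := by
            rw [Finset.card_insert_of_notMem hxMem, Finset.card_insert_of_notMem hyMem,
              Finset.card_union_of_disjoint hdisj]
            omega
          omega
    by_cases hix : i ∈ x0
    · exact main _ hy0F (by rw [mem_flip_iff]; tauto) (by rw [flip_flip]; exact hx0)
    · exact main x0 hx0 hix hy0F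

end ZB

section Glue

open ZB

variable {V : Type*}

/-- Set-level fort predicate. -/
def SFort (G : SimpleGraph V) (S : Set V) : Prop :=
  ∀ b ∉ S, ∀ w ∈ S, G.Adj b w → ∃ w' ∈ S, G.Adj b w' ∧ w' ≠ w

lemma sfort_fixed {G : SimpleGraph V} {S : Set V} (h : SFort G S) : zbStep G S = S := by
  ext w
  constructor
  · exact fun hw => hw.1
  · intro hw
    refine ⟨hw, ?_⟩
    rintro ⟨b, hbS, hadj, huniq⟩
    obtain ⟨w', hw', hadj', hne⟩ := h b hbS w hw hadj
    exact hne (huniq w' hw' hadj')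

lemma sfort_blocking {G : SimpleGraph V} {S : Set V} (h : SFort G S) (hne : S.Nonempty) :
    IsZeroBlocking G S := by
  intro k
  rw [Function.iterate_fixed (sfort_fixed h)]
  exact hne

lemma zbStep_subset (G : SimpleGraph V) (W : Set V) : zbStep G W ⊆ W := fun _ hw => hw.1

lemma blocking_exists_fort [Finite V] (G : SimpleGraph V) (W : Set V)
    (h : IsZeroBlocking G W) : ∃ S : Set V, S ⊆ W ∧ S.Nonempty ∧ SFort G S := by
  have hsub : ∀ k, (zbStep G)^[k+1] W ⊆ (zbStep G)^[k] W := by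
    intro k
    rw [Function.iterate_succ_apply']
    exact zbStep_subset _ _
  have hsubW : ∀ k, (zbStep G)^[k] W ⊆ W := by
    intro k
    induction k with
    | zero => exact fun _ hw => hw
    | succ k ih => exact (hsub k).trans ih
  have hstab : ∃ k, (zbStep G)^[k+1] W = (zbStep G)^[k] W := by
    by_contra hc
    push_neg at hc
    have hlt : ∀ k, ((zbStep G)^[k+1] W).ncard < ((zbStep G)^[k] W).ncard := fun k =>
      Set.ncard_lt_ncard (ssubset_of_subset_of_ne (hsub k) (hc k)) (Set.toFinite _)
    have hbd : ∀ k, ((zbStep G)^[k] W).ncard + k ≤ W.ncard := by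
      intro k
      induction k with
      | zero => simp
      | succ k ih =>
        have := hlt k
        omega
    have := hbd (W.ncard + 1)
    omega
  obtain ⟨k, hk⟩ := hstab
  refine ⟨(zbStep G)^[k] W, hsubW k, h k, ?_⟩
  intro b hb w hw hadj
  by_contra hcon
  push_neg at hcon
  have hnot : w ∉ zbStep G ((zbStep G)^[k] W) := by
    intro hmem
    exact hmem.2 ⟨b, hb, hadj, hcon⟩
  apply hnot
  have heq : zbStep G ((zbStep G)^[k] W) = (zbStep G)^[k] W :=
    (Function.iterate_succ_apply' (zbStep G) k W).symm.trans hk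
  rw [heq]
  exact hw

end Glue

section Cube

open ZB

variable {n : ℕ}

lemma cube_adj {x y : Finset (Fin n)} : (cubeGraph n).Adj x y ↔ ZB.adj x y := Iff.rfl

lemma sfort_encard {S : Set (Finset (Fin n))} (h : SFort (cubeGraph n) S)
    (hne : S.Nonempty) : (n : ℕ∞) ≤ S.encard := by
  classical
  have hfin : S.Finite := Set.toFinite S
  set FS := hfin.toFinset with hFS
  have hmem : ∀ a, a ∈ FS ↔ a ∈ S := fun a => Set.Finite.mem_toFinset _
  have hfort : ZB.IsFortOn (Finset.univ : Finset (Fin n)) FS := by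
    constructor
    · exact fun s _ => Finset.subset_univ s
    · intro b _ hbF w hwF hadj
      obtain ⟨w', hw', h1, h2⟩ := h b (fun hb => hbF ((hmem b).mpr hb)) w ((hmem w).mp hwF) hadj
      exact ⟨w', (hmem w').mpr hw', h1, h2⟩
  obtain ⟨a, ha⟩ := hne
  have hFne : FS.Nonempty := ⟨a, (hmem a).mpr ha⟩
  have hcard := (ZB.fort_card (Finset.univ : Finset (Fin n)) FS hfort hFne).1
  rw [Finset.card_univ, Fintype.card_fin] at hcard
  rw [hfin.encard_eq_coe_toFinset_card]
  exact_mod_cast hcard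

lemma nbhd_eq_image (x : Finset (Fin n)) :
    (cubeGraph n).neighborSet x =
      ↑(Finset.univ.image (fun j : Fin n => symmDiff x {j})) := by
  ext y
  simp only [SimpleGraph.mem_neighborSet, Finset.coe_image, Set.mem_image, Finset.mem_coe,
    Finset.coe_univ, Set.image_univ, Set.mem_range]
  rw [cube_adj, ZB.adj_iff]
  tauto

lemma nbhd_encard (x : Finset (Fin n)) :
    ((cubeGraph n).neighborSet x).encard = (n : ℕ∞) := by
  rw [nbhd_eq_image, Set.encard_coe_eq_coe_finsetCard,
    Finset.card_image_of_injective _ (fun a b hab => ZB.flip_inj hab),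
    Finset.card_univ, Fintype.card_fin]

lemma nbhd_nonempty (hn : 2 ≤ n) (x : Finset (Fin n)) :
    ((cubeGraph n).neighborSet x).Nonempty := by
  refine ⟨symmDiff x {⟨0, by omega⟩}, ?_⟩
  exact ZB.adj_flip x _

lemma nbhd_fort (hn : 2 ≤ n) (x : Finset (Fin n)) :
    SFort (cubeGraph n) ((cubeGraph n).neighborSet x) := by
  intro b hb w hw hadj
  rw [SimpleGraph.mem_neighborSet, cube_adj, ZB.adj_iff] at hw
  obtain ⟨j, rfl⟩ := hw
  obtain ⟨k, hk⟩ := ZB.adj_iff.mp (ZB.adj_symm (show ZB.adj b _ from hadj))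
  by_cases hkj : k = j
  · -- b = x : any other neighbor works
    have hbx : b = x := by rw [hk, hkj]; exact flip_flip x j
    have : Nontrivial (Fin n) := Fin.nontrivial_iff_two_le.mpr hn
    obtain ⟨j', hj'⟩ := exists_ne j
    refine ⟨symmDiff x {j'}, ZB.adj_flip x j', ?_, ?_⟩
    · rw [hbx]; exact ZB.adj_flip x j'
    · exact fun e => hj' (ZB.flip_inj e)
  · refine ⟨symmDiff x {k}, ZB.adj_flip x k, ?_, ?_⟩
    · have hbj : symmDiff b {j} = symmDiff x {k} := by
        rw [hk, symmDiff_assoc, symmDiff_assoc, symmDiff_comm ({k} : Finset (Fin n)) {j},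
          symmDiff_symmDiff_cancel_left]
      rw [cube_adj, ← hbj]
      exact ZB.adj_flip b j
    · exact fun e => hkj (ZB.flip_inj e)

end Cube

theorem zbNum_cube (n : ℕ) (hn : 2 ≤ n) :
    zbNum (cubeGraph n) = (n : ℕ∞) ∧
    ∀ x : Finset (Fin n), IsZeroBlocking (cubeGraph n) ((cubeGraph n).neighborSet x) ∧
      ((cubeGraph n).neighborSet x).encard = (n : ℕ∞) := by
  constructor
  · apply le_antisymm
    · have hb := sfort_blocking (nbhd_fort hn (∅ : Finset (Fin n))) (nbhd_nonempty hn ∅)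
      calc zbNum (cubeGraph n) ≤ ((cubeGraph n).neighborSet ∅).encard := iInf₂_le _ hb
        _ = (n : ℕ∞) := nbhd_encard ∅
    · apply le_iInf
      intro W
      apply le_iInf
      intro hW
      obtain ⟨S, hSW, hSne, hSfort⟩ := blocking_exists_fort (cubeGraph n) W hW
      calc (n : ℕ∞) ≤ S.encard := sfort_encard hSfort hSne
        _ ≤ W.encard := Set.encard_mono hSW
  · intro x
    exact ⟨sfort_blocking (nbhd_fort hn x) (nbhd_nonempty hn x), nbhd_encard x⟩
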